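/- Let 1 ≤ r ≤ n, let a₁ and a_{r+1},…,a_n be reals with a_{r+1},…,a_n pairwise distinct and all distinct from a₁, set F(a) = (a-a₁)^r ∏_{i=r+1}^n (a-aᵢ), let ε₁,…,ε_n ∈ {-1,1} with Δᵢ(a) = εᵢ(a-aᵢ) (taking ε with index 1 for a₁), and let I ⊆ ℝ be an open interval on which all Δᵢ > 0. Then every function x(a) = ∑_{k=1}^{r} μ_k Δ₁(a)^{1/2−k} + ∑_{i=r+1}^n ξᵢ Δᵢ(a)^{-1/2}, with μ_k, ξᵢ ∈ ℝ, satisfies Op_n[F]x = 0 on I. -/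

import Mathlib

open Polynomial

/-- The Pochhammer symbol `(1/2)_s`. -/
noncomputable def poch (s : ℕ) : ℝ := (ascPochhammer ℝ s).eval (1/2 : ℝ)

/-- The operator `Op_n[F]` acting on `h`:
`(Op_n[F]h)(a) = ∑_{s=0}^{n} F^{(n-s)}(a)/(n-s)! · h^{(s)}(a)/(1/2)_s`. -/
noncomputable def Op (n : ℕ) (F h : ℝ → ℝ) (a : ℝ) : ℝ :=
  ∑ s ∈ Finset.range (n + 1),
    iteratedDeriv (n - s) F a / (Nat.factorial (n - s) : ℝ) *
      (iteratedDeriv s h a / poch s)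

/-!
Both sides of `Op_n[F]h` are linear, and `(u - b)^k ∣ F` means that the expansion of `F` in powers
of `u - b` only involves `(u - b)^m` with `k ≤ m ≤ n`; so it suffices to treat
`F = (u - b)^m` and `h = (ε (u - b))^(1/2 - k)`. Since
`(1/2 - k)(1/2 - k - 1)⋯(1/2 - k - s + 1) / (1/2)_s = (-1)^s (s + 1/2)_{k-1} / (1/2)_{k-1}`,
the `s`-th term of `Op_n[F]h(a)` is a common factor times `C(m, n - s) (-1)^s Q(s)` with `Q` a
polynomial of degree `k - 1 < m`. The sum of these is, up to sign, an `m`-th forward difference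
of `Q`, hence zero.
-/

open Finset

theorem Polynomial.sum_range_neg_one_pow_mul_choose_mul_eval {R : Type*} [CommRing R] {m : ℕ}
    {P : R[X]} (hP : P.natDegree < m) (y : R) :
    ∑ t ∈ range (m + 1), (-1) ^ (m - t) * (m.choose t : R) * P.eval (y + t) = 0 := by
  have := congrFun (fwdDiff_iter_eq_zero_of_degree_lt hP) y
  rw [fwdDiff_iter_eq_sum_shift] at this
  simpa [zsmul_eq_mul, mul_assoc, eq_comm] using this

theorem sum_range_choose_sub_mul_neg_one_pow_mul_eval {R : Type*} [CommRing R] {m n : ℕ}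
    (hmn : m ≤ n) {P : R[X]} (hP : P.natDegree < m) :
    ∑ s ∈ range (n + 1), (m.choose (n - s) : R) * ((-1) ^ s * P.eval (s : R)) = 0 := by
  rw [show n + 1 = (n - m) + (m + 1) by omega, sum_range_add]
  have hlow : ∀ s ∈ range (n - m), (m.choose (n - s) : R) * ((-1) ^ s * P.eval (s : R)) = 0 := by
    intro s hs
    rw [Nat.choose_eq_zero_of_lt (by rw [mem_range] at hs; omega), Nat.cast_zero, zero_mul]
  have hhigh : ∀ t ∈ range (m + 1),
      (m.choose (n - (n - m + t)) : R) * ((-1) ^ (n - m + t) * P.eval ((n - m + t : ℕ) : R))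
        = (-1) ^ n * ((-1) ^ (m - t) * (m.choose t : R) * P.eval (((n - m : ℕ) : R) + t)) := by
    intro t ht
    have htm : t ≤ m := by rw [mem_range] at ht; omega
    have hsign : (-1 : R) ^ (n - m + t) = (-1) ^ n * (-1) ^ (m - t) := by
      rw [← pow_add, show n + (m - t) = (n - m + t) + 2 * (m - t) by omega,
        pow_add _ (n - m + t), pow_mul, neg_one_sq, one_pow, mul_one]
    rw [show n - (n - m + t) = m - t by omega, Nat.choose_symm htm, hsign, Nat.cast_add]
    ring
  rw [sum_eq_zero hlow, zero_add, sum_congr rfl hhigh, ← mul_sum,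
    Polynomial.sum_range_neg_one_pow_mul_choose_mul_eval hP, mul_zero]

theorem ascPochhammer_eval_mul_eval_add_comm {S : Type*} [CommSemiring S] (w s : ℕ) (x : S) :
    (ascPochhammer S w).eval x * (ascPochhammer S s).eval (x + w)
      = (ascPochhammer S s).eval x * (ascPochhammer S w).eval (x + s) := by
  have hw := congrArg (eval x) (ascPochhammer_mul S w s)
  have hs := congrArg (eval x) (ascPochhammer_mul S s w)
  simp only [eval_mul, eval_comp, eval_add, eval_X, eval_natCast] at hw hs
  rw [hw, hs, add_comm]

theorem poch_pos (s : ℕ) : 0 < poch s :=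
  ascPochhammer_pos s _ one_half_pos

theorem poch_mul_descPochhammer_eval (w s : ℕ) :
    poch w * (descPochhammer ℝ s).eval ((1/2 : ℝ) - (w + 1 : ℕ))
      = (-1) ^ s * (poch s * (ascPochhammer ℝ w).eval ((s : ℝ) + 1/2)) := by
  have hneg := ascPochhammer_eval_neg_eq_descPochhammer ℝ ((1/2 : ℝ) - (w + 1 : ℕ)) s
  have hcomm := ascPochhammer_eval_mul_eval_add_comm w s (1/2 : ℝ)
  rw [show -((1/2 : ℝ) - (w + 1 : ℕ)) = 1/2 + w by push_cast; ring] at hneg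
  have hdesc : (descPochhammer ℝ s).eval ((1/2 : ℝ) - (w + 1 : ℕ))
      = (-1) ^ s * (ascPochhammer ℝ s).eval ((1/2 : ℝ) + w) := by
    rw [hneg, ← mul_assoc, ← mul_pow]
    simp
  rw [poch, poch, hdesc, mul_left_comm, hcomm, add_comm (1/2 : ℝ)]

section IteratedDeriv

variable {𝕜 : Type*} [NontriviallyNormedField 𝕜]

theorem iteratedDeriv_comp_mul_left {F : Type*} [NormedAddCommGroup F] [NormedSpace 𝕜 F]
    (f : 𝕜 → F) (c : 𝕜) (s : ℕ) :
    iteratedDeriv s (fun x => f (c * x)) = fun x => c ^ s • iteratedDeriv s f (c * x) := by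
  induction s with
  | zero => simp
  | succ s ih =>
    funext x
    rw [iteratedDeriv_succ, ih, deriv_fun_const_smul_field, iteratedDeriv_succ, pow_succ, mul_smul]
    exact congrArg _ (deriv_comp_mul_left c _ x)

theorem iteratedDeriv_pow_sub (b : 𝕜) (m j : ℕ) (a : 𝕜) :
    iteratedDeriv j (fun u => (u - b) ^ m) a = m.descFactorial j * (a - b) ^ (m - j) := by
  rw [iteratedDeriv_comp_sub_const j (fun v => v ^ m) b]
  exact iteratedDeriv_pow m j

end IteratedDeriv

theorem Real.iteratedDeriv_rpow_const (p : ℝ) (s : ℕ) :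
    iteratedDeriv s (fun y : ℝ => y ^ p) = fun y => (descPochhammer ℝ s).eval p * y ^ (p - s) := by
  funext y
  rw [iteratedDeriv_eq_iterate, Real.iter_deriv_rpow_const]

theorem iteratedDeriv_rpow_mul_sub (ε b p a : ℝ) (s : ℕ) :
    iteratedDeriv s (fun u => (ε * (u - b)) ^ p) a
      = ε ^ s * ((descPochhammer ℝ s).eval p * (ε * (a - b)) ^ (p - s)) := by
  rw [iteratedDeriv_comp_sub_const s (fun v => (ε * v) ^ p) b,
    iteratedDeriv_comp_mul_left (fun v => v ^ p), Real.iteratedDeriv_rpow_const]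
  rfl

theorem contDiffAt_rpow_mul_sub {N : WithTop ℕ∞} {ε b p t : ℝ} (ht : ε * (t - b) ≠ 0) :
    ContDiffAt ℝ N (fun u => (ε * (u - b)) ^ p) t :=
  (Real.contDiffAt_rpow_const_of_ne ht).comp t
    (contDiffAt_const.mul (contDiffAt_id.sub contDiffAt_const))

section Linearity

variable {n : ℕ} {F : ℝ → ℝ} {a : ℝ}

theorem Op_fun_add {f g : ℝ → ℝ} (hf : ContDiffAt ℝ n f a) (hg : ContDiffAt ℝ n g a) :
    Op n F (fun u => f u + g u) a = Op n F f a + Op n F g a := by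
  simp only [Op, ← sum_add_distrib]
  refine sum_congr rfl fun s hs => ?_
  have hsn : (s : WithTop ℕ∞) ≤ n := by exact_mod_cast Nat.lt_succ_iff.mp (mem_range.mp hs)
  rw [iteratedDeriv_fun_add (hf.of_le hsn) (hg.of_le hsn)]
  ring

theorem Op_fun_sum {ι : Type*} {t : Finset ι} {f : ι → ℝ → ℝ}
    (hf : ∀ i ∈ t, ContDiffAt ℝ n (f i) a) :
    Op n F (fun u => ∑ i ∈ t, f i u) a = ∑ i ∈ t, Op n F (f i) a := by
  simp only [Op]
  rw [sum_comm]
  refine sum_congr rfl fun s hs => ?_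
  have hsn : (s : WithTop ℕ∞) ≤ n := by exact_mod_cast Nat.lt_succ_iff.mp (mem_range.mp hs)
  rw [iteratedDeriv_fun_sum fun i hi => (hf i hi).of_le hsn, sum_div, mul_sum]

theorem Op_const_mul (c : ℝ) (f : ℝ → ℝ) : Op n F (fun u => c * f u) a = c * Op n F f a := by
  simp only [Op, mul_sum, iteratedDeriv_const_mul_field]
  refine sum_congr rfl fun s _ => ?_
  ring

theorem Op_fun_sum_const_mul_left {ι : Type*} {t : Finset ι} (c : ι → ℝ) {G : ι → ℝ → ℝ}
    (hG : ∀ i ∈ t, ContDiffAt ℝ n (G i) a) (h : ℝ → ℝ) :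
    Op n (fun u => ∑ i ∈ t, c i * G i u) h a = ∑ i ∈ t, c i * Op n (G i) h a := by
  simp only [Op, mul_sum]
  rw [sum_comm]
  refine sum_congr rfl fun s _ => ?_
  have hsn : ((n - s : ℕ) : WithTop ℕ∞) ≤ n := by exact_mod_cast Nat.sub_le n s
  rw [iteratedDeriv_fun_sum fun i hi => contDiffAt_const.mul ((hG i hi).of_le hsn), sum_div,
    sum_mul]
  refine sum_congr rfl fun i _ => ?_
  rw [iteratedDeriv_const_mul_field]
  ring

end Linearity

theorem Op_pow_sub_rpow_eq_zero {n m k : ℕ} (hk : 0 < k) (hkm : k ≤ m) (hmn : m ≤ n)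
    {ε b a : ℝ} (ha : ε * (a - b) ≠ 0) :
    Op n (fun u => (u - b) ^ m) (fun u => (ε * (u - b)) ^ ((1/2 : ℝ) - k)) a = 0 := by
  obtain ⟨w, rfl⟩ : ∃ w, k = w + 1 := ⟨k - 1, by omega⟩
  obtain ⟨hε, hab⟩ := mul_ne_zero_iff.mp ha
  set R : ℝ[X] := (ascPochhammer ℝ w).comp (X + C (1/2))
  have hR : R.natDegree < m := by
    simp only [R, natDegree_comp, ascPochhammer_natDegree, natDegree_X_add_C, mul_one]
    omega
  set K := (ε * (a - b)) ^ ((1/2 : ℝ) - (w + 1 : ℕ)) / (a - b) ^ (n - m) / poch w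
  have hterm : ∀ s ∈ range (n + 1),
      iteratedDeriv (n - s) (fun u => (u - b) ^ m) a / (n - s).factorial *
        (iteratedDeriv s (fun u => (ε * (u - b)) ^ ((1/2 : ℝ) - (w + 1 : ℕ))) a / poch s)
      = K * ((m.choose (n - s) : ℝ) * ((-1) ^ s * R.eval (s : ℝ))) := by
    intro s hs
    have hsn : s ≤ n := by rw [mem_range] at hs; omega
    have hs_pos := poch_pos s
    have hw_pos := poch_pos w
    have hdesc := (eq_div_iff hw_pos.ne').mpr
      ((mul_comm _ _).trans (poch_mul_descPochhammer_eval w s))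
    rw [iteratedDeriv_pow_sub, iteratedDeriv_rpow_mul_sub, Real.rpow_sub_natCast ha, hdesc]
    rcases lt_or_ge m (n - s) with hlt | hle
    · simp [Nat.descFactorial_eq_zero_iff_lt.mpr hlt, Nat.choose_eq_zero_of_lt hlt]
    · have hpow : (a - b) ^ s = (a - b) ^ (n - m) * (a - b) ^ (m - (n - s)) := by
        rw [← pow_add]; congr 1; omega
      rw [Nat.descFactorial_eq_factorial_mul_choose, mul_pow, hpow]
      simp only [R, eval_comp, eval_add, eval_X, eval_C, K]
      field_simp
      push_cast
      ring
  rw [Op, sum_congr rfl hterm, ← mul_sum, sum_range_choose_sub_mul_neg_one_pow_mul_eval hmn hR,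
    mul_zero]

theorem Op_eval_rpow_eq_zero {n k : ℕ} (hk : 0 < k) {b : ℝ} {P : ℝ[X]} (hdeg : P.natDegree ≤ n)
    (hdvd : (X - C b) ^ k ∣ P) {ε a : ℝ} (ha : ε * (a - b) ≠ 0) :
    Op n (fun u => P.eval u) (fun u => (ε * (u - b)) ^ ((1/2 : ℝ) - k)) a = 0 := by
  have hexpand : (fun u => P.eval u)
      = fun u => ∑ m ∈ range (n + 1), (taylor b P).coeff m * (u - b) ^ m := by
    funext u
    rw [← sub_add_cancel u b, ← taylor_eval, sub_add_cancel,
      eval_eq_sum_range' (n := n + 1) (by rw [natDegree_taylor]; omega)]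
  have hcoeff : ∀ m < k, (taylor b P).coeff m = 0 := by
    refine X_pow_dvd_iff.mp ?_
    obtain ⟨G, rfl⟩ := hdvd
    exact ⟨taylor b G, by simp [taylor_mul, taylor_pow, taylor_X, taylor_C]⟩
  rw [hexpand, Op_fun_sum_const_mul_left _ fun m _ => by fun_prop]
  refine sum_eq_zero fun m hm => ?_
  rcases lt_or_ge m k with hmk | hkm
  · rw [hcoeff m hmk, zero_mul]
  · rw [Op_pow_sub_rpow_eq_zero hk hkm (by rw [mem_range] at hm; omega) ha, mul_zero]

theorem stmt14_general (n r : ℕ) (hrn : r ≤ n)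
    (a₁ : ℝ) (as : ℕ → ℝ)
    (ε₁ : ℝ)
    (εs : ℕ → ℝ)
    (I : Set ℝ)
    (hΔ₁ : ∀ t ∈ I, 0 < ε₁ * (t - a₁))
    (hΔ : ∀ i ∈ Finset.Icc (r + 1) n, ∀ t ∈ I, 0 < εs i * (t - as i))
    (μ : ℕ → ℝ) (ξ : ℕ → ℝ) :
    ∀ t ∈ I,
      Op n (fun u => (u - a₁) ^ r * ∏ i ∈ Finset.Icc (r + 1) n, (u - as i))
        (fun u =>
          (∑ k ∈ Finset.Icc 1 r, μ k * (ε₁ * (u - a₁)) ^ ((1/2 : ℝ) - (k : ℝ))) +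
            ∑ i ∈ Finset.Icc (r + 1) n, ξ i * (εs i * (u - as i)) ^ (-(1/2) : ℝ)) t = 0 := by
  intro t ht
  set P : ℝ[X] := (X - C a₁) ^ r * ∏ i ∈ Icc (r + 1) n, (X - C (as i))
  have hF : (fun u => (u - a₁) ^ r * ∏ i ∈ Icc (r + 1) n, (u - as i)) = fun u => P.eval u := by
    funext u
    simp [P, eval_prod]
  have hdeg : P.natDegree ≤ n := natDegree_mul_le.trans (by
    simp only [natDegree_pow, natDegree_X_sub_C, natDegree_finsetProd_X_sub_C_eq_card,
      Nat.card_Icc]; omega)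
  have h₁ : ε₁ * (t - a₁) ≠ 0 := (hΔ₁ t ht).ne'
  have hs : ∀ i ∈ Icc (r + 1) n, εs i * (t - as i) ≠ 0 := fun i hi => (hΔ i hi t ht).ne'
  have hfirst : ∀ k ∈ Icc 1 r,
      Op n P.eval (fun u => μ k * (ε₁ * (u - a₁)) ^ ((1/2 : ℝ) - k)) t = 0 := by
    intro k hk
    rw [mem_Icc] at hk
    rw [Op_const_mul, Op_eval_rpow_eq_zero hk.1 hdeg
      (dvd_mul_of_dvd_left (pow_dvd_pow _ hk.2) _) h₁, mul_zero]
  have hsecond : ∀ i ∈ Icc (r + 1) n,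
      Op n P.eval (fun u => ξ i * (εs i * (u - as i)) ^ (-(1/2) : ℝ)) t = 0 := by
    intro i hi
    rw [show (-(1/2) : ℝ) = 1/2 - (1 : ℕ) by norm_num, Op_const_mul,
      Op_eval_rpow_eq_zero one_pos hdeg
        (by rw [pow_one]; exact dvd_mul_of_dvd_right (dvd_prod_of_mem _ hi) _) (hs i hi), mul_zero]
  have hμ : ∀ k ∈ Icc 1 r, ContDiffAt ℝ n (fun u => μ k * (ε₁ * (u - a₁)) ^ ((1/2 : ℝ) - k)) t :=
    fun _ _ => contDiffAt_const.mul (contDiffAt_rpow_mul_sub h₁)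
  have hξ : ∀ i ∈ Icc (r + 1) n,
      ContDiffAt ℝ n (fun u => ξ i * (εs i * (u - as i)) ^ (-(1/2) : ℝ)) t :=
    fun i hi => contDiffAt_const.mul (contDiffAt_rpow_mul_sub (hs i hi))
  rw [hF, Op_fun_add (.sum hμ) (.sum hξ), Op_fun_sum hμ, Op_fun_sum hξ, sum_eq_zero hfirst,
    sum_eq_zero hsecond, add_zero]

/-- For `F(a) = (a-a₁)^r ∏_{i=r+1}^n (a-aᵢ)` with `a₁` of multiplicity
`1 ≤ r ≤ n` and the remaining roots pairwise distinct and distinct from `a₁`, every function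
`x(a) = ∑_{k=1}^{r} μ_k Δ₁(a)^{1/2−k} + ∑_{i=r+1}^n ξᵢ Δᵢ(a)^{-1/2}` satisfies
`Op_n[F]x = 0` on the open interval `I` where all `Δᵢ > 0`. -/
theorem stmt14 (n r : ℕ) (hr : 1 ≤ r) (hrn : r ≤ n)
    (a₁ : ℝ) (as : ℕ → ℝ)
    (hdist : ∀ i ∈ Finset.Icc (r + 1) n, ∀ j ∈ Finset.Icc (r + 1) n, i ≠ j → as i ≠ as j)
    (hne : ∀ i ∈ Finset.Icc (r + 1) n, as i ≠ a₁)
    (ε₁ : ℝ) (hε₁ : ε₁ = 1 ∨ ε₁ = -1)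
    (εs : ℕ → ℝ) (hεs : ∀ i ∈ Finset.Icc (r + 1) n, εs i = 1 ∨ εs i = -1)
    (I : Set ℝ) (hIopen : IsOpen I) (hIconn : I.OrdConnected)
    (hΔ₁ : ∀ t ∈ I, 0 < ε₁ * (t - a₁))
    (hΔ : ∀ i ∈ Finset.Icc (r + 1) n, ∀ t ∈ I, 0 < εs i * (t - as i))
    (μ : ℕ → ℝ) (ξ : ℕ → ℝ) :
    ∀ t ∈ I,
      Op n (fun u => (u - a₁) ^ r * ∏ i ∈ Finset.Icc (r + 1) n, (u - as i))
        (fun u =>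
          (∑ k ∈ Finset.Icc 1 r, μ k * (ε₁ * (u - a₁)) ^ ((1/2 : ℝ) - (k : ℝ))) +
            ∑ i ∈ Finset.Icc (r + 1) n, ξ i * (εs i * (u - as i)) ^ (-(1/2) : ℝ)) t = 0 :=
  stmt14_general n r hrn a₁ as ε₁ εs I hΔ₁ hΔ μ ξ
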